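/- arXiv:cond-mat/0302514 — 2 statements merged into one kernel-verified Lean document; each statement's English description precedes it below -/
import Mathlib

section
/- Fix w with 1 ≤ w < x_V/x_U, and suppose U(x_U⁻) < ∞ and U(x_U⁻)·V(w·x_U) < 1. Let P = Σ_{n≥1} p_n X^n and V_w = Σ_{n≥0} b_n w^n X^n be the corresponding formal power series over ℝ, and define the sequence (Z_n(w))_{n≥0} by Σ_{n≥0} Z_n(w) X^n = V_w · (1 − P·V_w)⁻¹ as formal power series. Then the radius of convergence of Σ_{n≥0} Z_n(w) x^n, i.e. sup{r ≥ 0 : Σ_{n≥0} Z_n(w)·r^n converges}, equals x_U. -/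
open Filter Topology PowerSeries

/-!
Write `V_w` for the path series and `Q = P·V_w`, so that `Z = V_w + Q·Z` and all coefficients are
nonnegative. Since `coeff n Z ≥ coeff n Q · coeff 0 Z ≥ p_n b_0²`, convergence of `Z` at `x`
forces convergence of `U` at `x`, so the radius is at most `x_U`. Conversely, for `0 ≤ r < x_U`
the partial sums `S_N` of `Z` at `r` satisfy the renewal inequality
`S_N ≤ V(w r) + U(r) V(w r) S_N ≤ V(w r) + U(x_U⁻) V(w x_U) S_N`, and the subcriticality
`U(x_U⁻) V(w x_U) < 1` bounds them uniformly.
-/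

lemma sum_range_sum_antidiagonal_le_mul {f g : ℕ → ℝ} (hf : ∀ i, 0 ≤ f i)
    (hg : ∀ j, 0 ≤ g j) (N : ℕ) :
    ∑ n ∈ Finset.range N, ∑ q ∈ Finset.HasAntidiagonal.antidiagonal n, f q.1 * g q.2 ≤
      (∑ i ∈ Finset.range N, f i) * ∑ j ∈ Finset.range N, g j := by
  have hdisj : (Finset.range N : Set ℕ).PairwiseDisjoint Finset.HasAntidiagonal.antidiagonal := by
    intro m _ n _ hmn
    refine Finset.disjoint_left.2 fun q hqm hqn => hmn ?_
    rw [Finset.HasAntidiagonal.mem_antidiagonal] at hqm hqn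
    omega
  have hsub : (Finset.range N).biUnion Finset.HasAntidiagonal.antidiagonal ⊆
      Finset.range N ×ˢ Finset.range N := by
    intro q hq
    simp only [Finset.mem_biUnion, Finset.mem_range, Finset.HasAntidiagonal.mem_antidiagonal] at hq
    simp only [Finset.mem_product, Finset.mem_range]
    omega
  rw [← Finset.sum_biUnion hdisj, Finset.sum_mul_sum, ← Finset.sum_product']
  exact Finset.sum_le_sum_of_subset_of_nonneg hsub fun q _ _ => mul_nonneg (hf _) (hg _)

lemma tsum_mul_pow_le_tsum_mul_pow {a : ℕ → ℝ} (ha : ∀ n, 0 ≤ a n) {x y : ℝ} (hx : 0 ≤ x)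
    (hxy : x ≤ y) (hy : Summable fun n => a n * y ^ n) :
    ∑' n, a n * x ^ n ≤ ∑' n, a n * y ^ n := by
  have hle : ∀ n, a n * x ^ n ≤ a n * y ^ n := fun n =>
    mul_le_mul_of_nonneg_left (pow_le_pow_left₀ hx hxy n) (ha n)
  exact (hy.of_nonneg_of_le (fun n => mul_nonneg (ha n) (pow_nonneg hx n)) hle).tsum_le_tsum hle hy

lemma tsum_mul_pow_le_of_tendsto {a : ℕ → ℝ} (ha : ∀ n, 0 ≤ a n) {R L r : ℝ}
    (hconv : ∀ x, 0 ≤ x → x < R → Summable fun n => a n * x ^ n)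
    (hL : Tendsto (fun x => ∑' n, a n * x ^ n) (𝓝[<] R) (𝓝 L)) (hr0 : 0 ≤ r) (hr : r < R) :
    ∑' n, a n * r ^ n ≤ L :=
  ge_of_tendsto hL <| eventually_of_mem (Ioo_mem_nhdsLT hr) fun x hx =>
    tsum_mul_pow_le_tsum_mul_pow ha hr0 hx.1.le (hconv x (hr0.trans hx.1.le) hx.2)

lemma sSup_summable_mul_pow_eq {a : ℕ → ℝ} {R : ℝ} (hR : 0 < R)
    (hconv : ∀ r, 0 ≤ r → r < R → Summable fun n => a n * r ^ n)
    (hdiv : ∀ r, R < r → ¬ Summable fun n => a n * r ^ n) :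
    sSup {r : ℝ | 0 ≤ r ∧ Summable fun n => a n * r ^ n} = R := by
  refine csSup_eq_of_forall_le_of_forall_lt_exists_gt ⟨0, le_rfl, hconv 0 le_rfl hR⟩
    (fun r hr => not_lt.1 fun hRr => hdiv r hRr hr.2) fun y hy => ?_
  obtain ⟨r, hyr, hrR⟩ := exists_between (max_lt hy hR)
  have hr0 : 0 ≤ r := (le_max_right y 0).trans hyr.le
  exact ⟨r, ⟨hr0, hconv r hr0 hrR⟩, (le_max_left y 0).trans_lt hyr⟩

namespace PowerSeries

def CoeffNonneg (F : ℝ⟦X⟧) : Prop := ∀ n, 0 ≤ coeff n F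

namespace CoeffNonneg

variable {F G : ℝ⟦X⟧}

lemma mk {a : ℕ → ℝ} (ha : ∀ n, 0 ≤ a n) : CoeffNonneg (PowerSeries.mk a) := by
  simpa [CoeffNonneg] using ha

lemma mul (hF : CoeffNonneg F) (hG : CoeffNonneg G) : CoeffNonneg (F * G) := fun n => by
  rw [coeff_mul]
  exact Finset.sum_nonneg fun q _ => mul_nonneg (hF _) (hG _)

lemma rescale (hF : CoeffNonneg F) {r : ℝ} (hr : 0 ≤ r) : CoeffNonneg (rescale r F) := fun n => by
  rw [coeff_rescale]
  exact mul_nonneg (pow_nonneg hr n) (hF n)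

lemma coeff_mul_coeff_zero_le (hF : CoeffNonneg F) (hG : CoeffNonneg G) (n : ℕ) :
    coeff n F * coeff 0 G ≤ coeff n (F * G) := by
  rw [coeff_mul]
  exact Finset.single_le_sum (f := fun q : ℕ × ℕ => coeff q.1 F * coeff q.2 G)
    (fun q _ => mul_nonneg (hF _) (hG _)) (a := (n, 0)) (by simp)

lemma sum_range_coeff_mul_le (hF : CoeffNonneg F) (hG : CoeffNonneg G) (N : ℕ) :
    ∑ n ∈ Finset.range N, coeff n (F * G) ≤
      (∑ n ∈ Finset.range N, coeff n F) * ∑ n ∈ Finset.range N, coeff n G := by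
  simp only [coeff_mul]
  exact sum_range_sum_antidiagonal_le_mul hF hG N

variable {A P Q Z : ℝ⟦X⟧}

lemma of_eq_add_mul (hZ : Z = A + Q * Z) (hA : CoeffNonneg A) (hQ : CoeffNonneg Q)
    (hQ0 : constantCoeff Q = 0) : CoeffNonneg Z := by
  intro n
  induction n using Nat.strong_induction_on with
  | _ n ih =>
    rw [hZ, map_add, coeff_mul]
    refine add_nonneg (hA n) (Finset.sum_nonneg fun q hq => ?_)
    rw [Finset.HasAntidiagonal.mem_antidiagonal] at hq
    rcases Nat.eq_zero_or_pos q.1 with h | h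
    · simp [h, hQ0]
    · exact mul_nonneg (hQ _) (ih q.2 (by omega))

lemma summable_of_eq_add_mul (hZ : Z = A + Q * Z) (hA : CoeffNonneg A) (hQ : CoeffNonneg Q)
    (hZnn : CoeffNonneg Z) (hAs : Summable fun n => coeff n A) {ρ : ℝ} (hρ : ρ < 1)
    (hQρ : ∀ N, ∑ n ∈ Finset.range N, coeff n Q ≤ ρ) :
    Summable fun n => coeff n Z := by
  refine summable_of_sum_range_le (c := (∑' n, coeff n A) / (1 - ρ)) hZnn fun N => ?_
  have hS : ∑ n ∈ Finset.range N, coeff n Z ≤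
      (∑' n, coeff n A) + ρ * ∑ n ∈ Finset.range N, coeff n Z :=
    calc ∑ n ∈ Finset.range N, coeff n Z
        = ∑ n ∈ Finset.range N, coeff n A + ∑ n ∈ Finset.range N, coeff n (Q * Z) := by
          conv_lhs => rw [hZ]
          simp only [map_add, Finset.sum_add_distrib]
      _ ≤ (∑' n, coeff n A) + ρ * ∑ n ∈ Finset.range N, coeff n Z := by
          gcongr
          · exact hAs.sum_le_tsum _ fun n _ => hA n
          · exact (sum_range_coeff_mul_le hQ hZnn N).trans
              (mul_le_mul_of_nonneg_right (hQρ N) (Finset.sum_nonneg fun n _ => hZnn n))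
  rw [le_div_iff₀ (sub_pos.2 hρ)]
  linarith

lemma coeff_mul_coeff_zero_mul_coeff_zero_le (hZ : Z = A + P * A * Z) (hP : CoeffNonneg P)
    (hA : CoeffNonneg A) (hZnn : CoeffNonneg Z) (n : ℕ) :
    coeff n P * coeff 0 A * coeff 0 Z ≤ coeff n Z := by
  conv_rhs => rw [hZ]
  rw [map_add]
  calc coeff n P * coeff 0 A * coeff 0 Z ≤ coeff n (P * A) * coeff 0 Z :=
        mul_le_mul_of_nonneg_right (hP.coeff_mul_coeff_zero_le hA n) (hZnn 0)
    _ ≤ coeff n (P * A * Z) := (hP.mul hA).coeff_mul_coeff_zero_le hZnn n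
    _ ≤ coeff n A + coeff n (P * A * Z) := le_add_of_nonneg_left (hA n)

lemma sum_range_coeff_mul_mul_pow_le (hF : CoeffNonneg F) (hG : CoeffNonneg G) {r : ℝ}
    (hr : 0 ≤ r) (hFs : Summable fun n => coeff n F * r ^ n)
    (hGs : Summable fun n => coeff n G * r ^ n) (N : ℕ) :
    ∑ n ∈ Finset.range N, coeff n (F * G) * r ^ n ≤
      (∑' n, coeff n F * r ^ n) * ∑' n, coeff n G * r ^ n := by
  simp only [mul_comm _ (r ^ _), ← coeff_rescale] at hFs hGs ⊢
  rw [map_mul]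
  exact (sum_range_coeff_mul_le (hF.rescale hr) (hG.rescale hr) N).trans <|
    mul_le_mul (hFs.sum_le_tsum _ fun n _ => hF.rescale hr n)
      (hGs.sum_le_tsum _ fun n _ => hG.rescale hr n)
      (Finset.sum_nonneg fun n _ => hG.rescale hr n) (tsum_nonneg (hF.rescale hr))

lemma summable_coeff_mul_pow_of_eq_add_mul (hZ : Z = A + Q * Z) (hA : CoeffNonneg A)
    (hQ : CoeffNonneg Q) (hZnn : CoeffNonneg Z) {r : ℝ} (hr : 0 ≤ r)
    (hAs : Summable fun n => coeff n A * r ^ n) {ρ : ℝ} (hρ : ρ < 1)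
    (hQρ : ∀ N, ∑ n ∈ Finset.range N, coeff n Q * r ^ n ≤ ρ) :
    Summable fun n => coeff n Z * r ^ n := by
  simp only [mul_comm _ (r ^ _), ← coeff_rescale] at hAs hQρ ⊢
  have hZr : PowerSeries.rescale r Z =
      PowerSeries.rescale r A + PowerSeries.rescale r Q * PowerSeries.rescale r Z := by
    conv_lhs => rw [hZ]
    rw [map_add, map_mul]
  exact summable_of_eq_add_mul hZr (hA.rescale hr) (hQ.rescale hr) (hZnn.rescale hr) hAs hρ hQρ

end CoeffNonneg

lemma eq_add_mul_of_eq_mul_inv {k : Type*} [Field k] {A Q Z : k⟦X⟧} (hQ0 : constantCoeff Q = 0)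
    (hZ : Z = A * (1 - Q)⁻¹) : Z = A + Q * Z := by
  have hZQ : Z * (1 - Q) = A := by
    rw [hZ, mul_assoc, PowerSeries.inv_mul_cancel _ (by simp [hQ0]), mul_one]
  rw [← hZQ]
  ring

end PowerSeries

lemma Summable.of_const_mul_le_mul_pow {a z : ℕ → ℝ} {c x : ℝ} (ha : ∀ n, 0 ≤ a n) (hc : 0 < c)
    (hx : 0 ≤ x) (h : ∀ n, c * a n ≤ z n) (hz : Summable fun n => z n * x ^ n) :
    Summable fun n => a n * x ^ n := by
  refine (hz.mul_left c⁻¹).of_nonneg_of_le (fun n => mul_nonneg (ha n) (pow_nonneg hx n))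
    fun n => ?_
  rw [le_inv_mul_iff₀ hc, ← mul_assoc]
  exact mul_le_mul_of_nonneg_right (h n) (pow_nonneg hx n)

theorem stmt_6_general
    (p b : ℕ → ℝ)
    (hp : ∀ n, 0 ≤ p n) (hp0 : p 0 = 0)
    (hb : ∀ n, 0 ≤ b n) (hb0 : 0 < b 0)
    (U V : ℝ → ℝ)
    (hU : ∀ x, U x = ∑' n, p n * x ^ n)
    (hV : ∀ x, V x = ∑' n, b n * x ^ n)
    (xU xV : ℝ) (hxU0 : 0 < xU)
    (hUconv : ∀ x : ℝ, 0 ≤ x → x < xU → Summable fun n => p n * x ^ n)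
    (hUdiv : ∀ x : ℝ, xU < x → ¬ Summable fun n => p n * x ^ n)
    (hVconv : ∀ x : ℝ, 0 ≤ x → x < xV → Summable fun n => b n * x ^ n)
    (w : ℝ) (hw1 : 1 ≤ w) (hw2 : w < xV / xU)
    (L : ℝ) (hL : Filter.Tendsto U (𝓝[<] xU) (𝓝 L))
    (hsub : L * V (w * xU) < 1)
    (Z : PowerSeries ℝ)
    (hZ : Z = PowerSeries.mk (fun n => b n * w ^ n) *
      (1 - PowerSeries.mk p * PowerSeries.mk (fun n => b n * w ^ n))⁻¹) :
    sSup {r : ℝ | 0 ≤ r ∧ Summable fun n => PowerSeries.coeff (R := ℝ) n Z * r ^ n} = xU := by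
  obtain rfl : U = fun x => ∑' n, p n * x ^ n := funext hU
  obtain rfl : V = fun x => ∑' n, b n * x ^ n := funext hV
  have hw0 : 0 ≤ w := zero_le_one.trans hw1
  have hwxU : w * xU < xV := (lt_div_iff₀ hxU0).1 hw2
  set Vw := PowerSeries.mk fun n => b n * w ^ n
  set Q := PowerSeries.mk p * Vw
  have hP : CoeffNonneg (PowerSeries.mk p) := CoeffNonneg.mk hp
  have hVw : CoeffNonneg Vw := CoeffNonneg.mk fun n => mul_nonneg (hb n) (pow_nonneg hw0 n)
  have hQ0 : constantCoeff Q = 0 := by simp [Q, hp0]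
  have hrec : Z = Vw + Q * Z := eq_add_mul_of_eq_mul_inv hQ0 hZ
  have hZnn : CoeffNonneg Z := .of_eq_add_mul hrec hVw (hP.mul hVw) hQ0
  refine sSup_summable_mul_pow_eq hxU0 (fun r hr0 hr => ?_) fun x hx hZx => hUdiv x hx ?_
  · have hwr : 0 ≤ w * r := mul_nonneg hw0 hr0
    have hwrx : w * r ≤ w * xU := mul_le_mul_of_nonneg_left hr.le hw0
    have hVw_r : (fun n => coeff n Vw * r ^ n) = fun n => b n * (w * r) ^ n := by
      ext n
      simp [Vw, mul_pow, mul_assoc]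
    have hVs : Summable fun n => coeff n Vw * r ^ n := hVw_r ▸ hVconv _ hwr (hwrx.trans_lt hwxU)
    have hPs : Summable fun n => coeff n (PowerSeries.mk p) * r ^ n := by
      simpa using hUconv r hr0 hr
    have hUr := tsum_mul_pow_le_of_tendsto hp hUconv hL hr0 hr
    refine hVw.summable_coeff_mul_pow_of_eq_add_mul hrec (hP.mul hVw) hZnn hr0 hVs hsub fun N =>
      (hP.sum_range_coeff_mul_mul_pow_le hVw hr0 hPs hVs N).trans ?_
    rw [hVw_r]
    simp only [coeff_mk]
    exact mul_le_mul hUr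
      (tsum_mul_pow_le_tsum_mul_pow hb hwr hwrx (hVconv _ (mul_nonneg hw0 hxU0.le) hwxU))
      (tsum_nonneg fun n => mul_nonneg (hb n) (pow_nonneg hwr n))
      ((tsum_nonneg fun n => mul_nonneg (hp n) (pow_nonneg hr0 n)).trans hUr)
  · have hZ0 : coeff 0 Z = b 0 := by simpa [hQ0, Vw] using congrArg (coeff 0) hrec
    refine .of_const_mul_le_mul_pow hp (mul_pos hb0 hb0) (hxU0.le.trans hx.le) (fun n => ?_) hZx
    have hlower := hP.coeff_mul_coeff_zero_mul_coeff_zero_le hrec hVw hZnn n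
    rwa [hZ0, coeff_mk, coeff_mk, pow_zero, mul_one, mul_assoc, mul_comm] at hlower

/-- Fix w with 1 ≤ w < x_V/x_U, and suppose U(x_U⁻) < ∞ and
U(x_U⁻)·V(w·x_U) < 1.  Then the radius of convergence of the chain generating
function Z(x,w) = V_w·(1 − P·V_w)⁻¹ (as a formal power series) equals x_U. -/
theorem stmt_6
    (p b : ℕ → ℝ)
    (hp : ∀ n, 0 ≤ p n) (hp0 : p 0 = 0)
    (hb : ∀ n, 0 ≤ b n) (hb0 : 0 < b 0)
    (hpN : ∃ N, 1 ≤ N ∧ 0 < p N) (hbM : ∃ M, 1 ≤ M ∧ 0 < b M)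
    (U V : ℝ → ℝ)
    (hU : ∀ x, U x = ∑' n, p n * x ^ n)
    (hV : ∀ x, V x = ∑' n, b n * x ^ n)
    (xU xV : ℝ) (hxU0 : 0 < xU) (hxUV : xU < xV) (hxV1 : xV ≤ 1)
    (hUconv : ∀ x : ℝ, 0 ≤ x → x < xU → Summable fun n => p n * x ^ n)
    (hUdiv : ∀ x : ℝ, xU < x → ¬ Summable fun n => p n * x ^ n)
    (hVconv : ∀ x : ℝ, 0 ≤ x → x < xV → Summable fun n => b n * x ^ n)
    (hVdiv : ∀ x : ℝ, xV < x → ¬ Summable fun n => b n * x ^ n)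
    (hVinf : Filter.Tendsto V (𝓝[<] xV) Filter.atTop)
    (w : ℝ) (hw1 : 1 ≤ w) (hw2 : w < xV / xU)
    (L : ℝ) (hL : Filter.Tendsto U (𝓝[<] xU) (𝓝 L))
    (hsub : L * V (w * xU) < 1)
    (Z : PowerSeries ℝ)
    (hZ : Z = PowerSeries.mk (fun n => b n * w ^ n) *
      (1 - PowerSeries.mk p * PowerSeries.mk (fun n => b n * w ^ n))⁻¹) :
    sSup {r : ℝ | 0 ≤ r ∧ Summable fun n => PowerSeries.coeff (R := ℝ) n Z * r ^ n} = xU :=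
  stmt_6_general p b hp hp0 hb hb0 U V hU hV xU xV hxU0 hUconv hUdiv hVconv w hw1 hw2 L hL hsub Z hZ
end

section
/- Suppose additionally that U'(x) → ∞ as x → x_U⁻. Define, for w ∈ (w_c, x_V/x_U), θ(w) = w·U(x₁(w))·V'(w·x₁(w)) / ( U'(x₁(w))·V(w·x₁(w)) + w·U(x₁(w))·V'(w·x₁(w)) ). Then θ(w) → 0 as w → w_c from the right; i.e., the phase transition at w_c is continuous. -/
/-! As `w ↓ w_c` the root `x₁(w)` of `U(x) V(wx) = 1` is pushed to the singularity `x_U`: for a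
fixed `x < x_U`, strict monotonicity of `U` gives `U(x) V(w_c x) < L V(w_c x_U) = 1`, this persists
for `w` near `w_c`, and monotonicity in `x` then forces `x₁(w) > x`. Along `x₁(w)` the numerator
of `θ` converges to `w_c L V'(w_c x_U)` (`V` is analytic there), while the denominator contains
`U'(x₁(w)) V(w x₁(w)) → ∞`. -/

open Filter Topology Set

section NonnegCoeffs

variable {c : ℕ → ℝ} {R : ℝ}

theorem summable_mul_pow_of_le (hc : ∀ n, 0 ≤ c n) {x y : ℝ} (hx : 0 ≤ x) (hxy : x ≤ y)
    (hy : Summable fun n => c n * y ^ n) : Summable fun n => c n * x ^ n :=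
  hy.of_nonneg_of_le (fun n => mul_nonneg (hc n) (pow_nonneg hx n))
    (fun n => mul_le_mul_of_nonneg_left (pow_le_pow_left₀ hx hxy n) (hc n))

theorem monotoneOn_tsum_mul_pow (hc : ∀ n, 0 ≤ c n)
    (hsum : ∀ x : ℝ, 0 ≤ x → x < R → Summable fun n => c n * x ^ n) :
    MonotoneOn (fun x => ∑' n, c n * x ^ n) (Ico 0 R) := fun _ hx y hy hxy =>
  Summable.tsum_le_tsum (fun n => mul_le_mul_of_nonneg_left (pow_le_pow_left₀ hx.1 hxy n) (hc n))
    (summable_mul_pow_of_le hc hx.1 hxy (hsum y hy.1 hy.2)) (hsum y hy.1 hy.2)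

theorem strictMonoOn_tsum_mul_pow (hc : ∀ n, 0 ≤ c n) {N : ℕ} (hN : N ≠ 0) (hcN : 0 < c N)
    (hsum : ∀ x : ℝ, 0 ≤ x → x < R → Summable fun n => c n * x ^ n) :
    StrictMonoOn (fun x => ∑' n, c n * x ^ n) (Ico 0 R) := fun _ hx y hy hxy =>
  Summable.tsum_lt_tsum (fun n => mul_le_mul_of_nonneg_left (pow_le_pow_left₀ hx.1 hxy.le n) (hc n))
    (mul_lt_mul_of_pos_left (pow_lt_pow_left₀ hxy hx.1 hN) hcN)
    (summable_mul_pow_of_le hc hx.1 hxy.le (hsum y hy.1 hy.2)) (hsum y hy.1 hy.2)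

theorem tsum_mul_pow_pos (hc : ∀ n, 0 ≤ c n) (hc0 : 0 < c 0) {x : ℝ} (hx : 0 ≤ x)
    (hs : Summable fun n => c n * x ^ n) : 0 < ∑' n, c n * x ^ n := by
  calc 0 < c 0 * x ^ 0 := by simpa using hc0
    _ ≤ ∑' n, c n * x ^ n := hs.le_tsum 0 fun n _ => mul_nonneg (hc n) (pow_nonneg hx n)

theorem analyticAt_tsum_mul_pow (hc : ∀ n, 0 ≤ c n)
    (hsum : ∀ x : ℝ, 0 ≤ x → x < R → Summable fun n => c n * x ^ n) {t : ℝ} (ht : |t| < R) :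
    AnalyticAt ℝ (fun x => ∑' n, c n * x ^ n) t := by
  set P := FormalMultilinearSeries.ofScalars ℝ c
  obtain ⟨r, htr, hrR⟩ := exists_between ht
  lift r to NNReal using (abs_nonneg t).trans htr.le
  have hrad : (r : ENNReal) ≤ P.radius := by
    refine P.le_radius_of_summable ?_
    simp_rw [P, FormalMultilinearSeries.ofScalars_norm, Real.norm_of_nonneg (hc _)]
    exact hsum r r.2 hrR
  have hP : P.sum = fun x => ∑' n, c n * x ^ n := by
    change FormalMultilinearSeries.ofScalarsSum c = _
    simp [FormalMultilinearSeries.ofScalarsSum_eq_tsum, smul_eq_mul]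
  have htP : ‖t‖ₑ < P.radius :=
    (ENNReal.coe_lt_coe.2 (show ‖t‖₊ < r from htr)).trans_le hrad
  rw [← hP]
  refine (P.hasFPowerSeriesOnBall (pos_of_gt htP)).analyticAt_of_mem ?_
  simpa [Metric.mem_eball, edist_zero_right] using htP

end NonnegCoeffs

theorem StrictMonoOn.lt_of_tendsto_nhdsLT {α β : Type*} [LinearOrder α] [TopologicalSpace α]
    [OrderTopology α] [DenselyOrdered α] [LinearOrder β] [TopologicalSpace β]
    [ClosedIciTopology β] {f : α → β} {a b t : α} {L : β} (hf : StrictMonoOn f (Ico a b))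
    (hL : Tendsto f (𝓝[<] b) (𝓝 L)) (ht : t ∈ Ico a b) : f t < L := by
  obtain ⟨s, hts, hsb⟩ := exists_between ht.2
  have := nhdsLT_neBot_of_exists_lt ⟨t, ht.2⟩
  have hs : s ∈ Ico a b := ⟨ht.1.trans hts.le, hsb⟩
  refine (hf ht hs hts).trans_le (ge_of_tendsto hL ?_)
  filter_upwards [Ioo_mem_nhdsLT hsb] with z hz
  exact hf.monotoneOn hs ⟨hs.1.trans hz.1.le, hz.2⟩ hz.1.le

theorem tendsto_nhdsLT_of_forall_eventually_lt {ι α β : Type*} [LinearOrder α]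
    [TopologicalSpace α] [OrderTopology α] [Preorder β] {l : Filter ι} {F : ι → α → β}
    {g : ι → α} {a b : α} {y : β} (hab : a < b) (hmono : ∀ᶠ w in l, MonotoneOn (F w) (Ico a b))
    (hlt : ∀ x ∈ Ico a b, ∀ᶠ w in l, F w x < y)
    (hroot : ∀ᶠ w in l, g w ∈ Ioo a b ∧ F w (g w) = y) : Tendsto g l (𝓝[<] b) := by
  have hlt_b : ∀ᶠ w in l, g w < b := hroot.mono fun w hw => hw.1.2
  refine tendsto_nhdsWithin_iff.2 ⟨tendsto_order.2 ⟨fun x hx => ?_, fun x hx => ?_⟩, hlt_b⟩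
  · have hx' : max x a ∈ Ico a b := ⟨le_max_right x a, max_lt hx hab⟩
    filter_upwards [hmono, hlt _ hx', hroot] with w hmono_w hlt_w ⟨hgw, hroot_w⟩
    by_contra! hle
    have := hmono_w (Ioo_subset_Ico_self hgw) hx' (hle.trans (le_max_left x a))
    exact (hroot_w ▸ this).not_gt hlt_w
  · exact hlt_b.mono fun w hw => hw.trans hx

theorem MonotoneOn.mul_comp_const_mul {U V : ℝ → ℝ} {xU xV w : ℝ} (hw0 : 0 ≤ w)
    (hwxU : w * xU < xV) (hU : MonotoneOn U (Ico 0 xU)) (hU0 : ∀ x ∈ Ico 0 xU, 0 ≤ U x)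
    (hV : MonotoneOn V (Ico 0 xV)) (hV0 : ∀ x ∈ Ico 0 xV, 0 ≤ V x) :
    MonotoneOn (fun x => U x * V (w * x)) (Ico 0 xU) := by
  have hmaps : MapsTo (w * ·) (Ico 0 xU) (Ico 0 xV) := fun x hx =>
    ⟨mul_nonneg hw0 hx.1, (mul_le_mul_of_nonneg_left hx.2.le hw0).trans_lt hwxU⟩
  exact hU.mul (hV.comp (fun x _ y _ hxy => mul_le_mul_of_nonneg_left hxy hw0) hmaps) hU0
    fun x hx => hV0 _ (hmaps hx)

theorem tendsto_root_nhdsLT {U V x₁ : ℝ → ℝ} {xU xV L wc : ℝ} (hxU0 : 0 < xU) (hwc0 : 0 < wc)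
    (hwcV : wc < xV / xU) (hUmono : MonotoneOn U (Ico 0 xU)) (hU0 : ∀ x ∈ Ico 0 xU, 0 ≤ U x)
    (hUlt : ∀ x ∈ Ico 0 xU, U x < L) (hVmono : MonotoneOn V (Ico 0 xV))
    (hVpos : ∀ x ∈ Ico 0 xV, 0 < V x) (hVcont : ∀ x ∈ Ico 0 xV, ContinuousAt V x)
    (hwc : L * V (wc * xU) = 1)
    (hx₁ : ∀ w ∈ Ioo wc (xV / xU), x₁ w ∈ Ioo 0 xU ∧ U (x₁ w) * V (w * x₁ w) = 1) :
    Tendsto x₁ (𝓝[>] wc) (𝓝[<] xU) := by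
  have hwcxU : wc * xU < xV := (lt_div_iff₀ hxU0).1 hwcV
  have hw : ∀ᶠ w in 𝓝[>] wc, w ∈ Ioo wc (xV / xU) := Ioo_mem_nhdsGT hwcV
  refine tendsto_nhdsLT_of_forall_eventually_lt (F := fun w x => U x * V (w * x)) hxU0
    ?_ ?_ (hw.mono hx₁)
  · filter_upwards [hw] with w hw
    exact hUmono.mul_comp_const_mul (hwc0.trans hw.1).le ((lt_div_iff₀ hxU0).1 hw.2) hU0
      hVmono fun x hx => (hVpos x hx).le
  · intro x hx
    have hwcx : wc * x ∈ Ico 0 xV :=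
      ⟨mul_nonneg hwc0.le hx.1, (mul_lt_mul_of_pos_left hx.2 hwc0).trans hwcxU⟩
    have hbelow : U x * V (wc * x) < 1 := calc
      U x * V (wc * x) < L * V (wc * x) := mul_lt_mul_of_pos_right (hUlt x hx) (hVpos _ hwcx)
      _ ≤ L * V (wc * xU) :=
        mul_le_mul_of_nonneg_left (hVmono hwcx ⟨by positivity, hwcxU⟩
          (mul_le_mul_of_nonneg_left hx.2.le hwc0.le)) ((hU0 x hx).trans (hUlt x hx).le)
      _ = 1 := hwc
    have hcont : ContinuousAt (fun w => U x * V (w * x)) wc := continuousAt_const.mul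
      ((hVcont _ hwcx).comp (f := (· * x)) (continuous_mul_const x).continuousAt)
    exact (hcont.eventually_lt continuousAt_const hbelow).filter_mono nhdsWithin_le_nhds

theorem stmt_9_general
    (p b : ℕ → ℝ)
    (hp : ∀ n, 0 ≤ p n)
    (hb : ∀ n, 0 ≤ b n) (hb0 : 0 < b 0)
    (hpN : ∃ N, 1 ≤ N ∧ 0 < p N)
    (U V : ℝ → ℝ)
    (hU : ∀ x, U x = ∑' n, p n * x ^ n)
    (hV : ∀ x, V x = ∑' n, b n * x ^ n)
    (xU xV : ℝ) (hxU0 : 0 < xU)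
    (hUconv : ∀ x : ℝ, 0 ≤ x → x < xU → Summable fun n => p n * x ^ n)
    (hVconv : ∀ x : ℝ, 0 ≤ x → x < xV → Summable fun n => b n * x ^ n)
    (L : ℝ) (hL : Filter.Tendsto U (𝓝[<] xU) (𝓝 L))
    (wc : ℝ) (hwc : wc ∈ Set.Ioo 1 (xV / xU)) (hwceq : L * V (wc * xU) = 1)
    (x₁ : ℝ → ℝ)
    (hx₁ : ∀ w ∈ Set.Ioo wc (xV / xU),
      x₁ w ∈ Set.Ioo 0 xU ∧ U (x₁ w) * V (w * x₁ w) = 1)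
    (hU'inf : Filter.Tendsto (deriv U) (𝓝[<] xU) Filter.atTop) :
    Filter.Tendsto
      (fun w => w * U (x₁ w) * deriv V (w * x₁ w) /
        (deriv U (x₁ w) * V (w * x₁ w) + w * U (x₁ w) * deriv V (w * x₁ w)))
      (𝓝[>] wc) (𝓝 0) := by
  obtain ⟨N, hN, hpN⟩ := hpN
  have hwc0 : 0 < wc := one_pos.trans hwc.1
  have hVpos : ∀ x ∈ Ico 0 xV, 0 < V x := fun x hx =>
    (hV x).symm ▸ tsum_mul_pow_pos hb hb0 hx.1 (hVconv x hx.1 hx.2)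
  have hVana : ∀ x ∈ Ico 0 xV, AnalyticAt ℝ V x := fun x hx =>
    funext hV ▸ analyticAt_tsum_mul_pow hb hVconv ((abs_of_nonneg hx.1).trans_lt hx.2)
  have hx₁lim : Tendsto x₁ (𝓝[>] wc) (𝓝[<] xU) :=
    tendsto_root_nhdsLT hxU0 hwc0 hwc.2 (funext hU ▸ monotoneOn_tsum_mul_pow hp hUconv)
      (fun x hx => (hU x).symm ▸ tsum_nonneg fun n => mul_nonneg (hp n) (pow_nonneg hx.1 n))
      (fun x hx => (funext hU ▸ strictMonoOn_tsum_mul_pow hp (by omega) hpN hUconv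
        ).lt_of_tendsto_nhdsLT hL hx)
      (funext hV ▸ monotoneOn_tsum_mul_pow hb hVconv) hVpos
      (fun x hx => (hVana x hx).continuousAt) hwceq hx₁
  have hwcxU : wc * xU ∈ Ico 0 xV := ⟨by positivity, (lt_div_iff₀ hxU0).1 hwc.2⟩
  have hw : Tendsto id (𝓝[>] wc) (𝓝 wc) := tendsto_id.mono_left nhdsWithin_le_nhds
  have hwx₁ : Tendsto (fun w => w * x₁ w) (𝓝[>] wc) (𝓝 (wc * xU)) :=
    hw.mul (hx₁lim.mono_right nhdsWithin_le_nhds)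
  have hnum : Tendsto (fun w => w * U (x₁ w) * deriv V (w * x₁ w)) (𝓝[>] wc)
      (𝓝 (wc * L * deriv V (wc * xU))) :=
    (hw.mul (hL.comp hx₁lim)).mul ((hVana _ hwcxU).deriv.continuousAt.tendsto.comp hwx₁)
  have hden : Tendsto (fun w => deriv U (x₁ w) * V (w * x₁ w)) (𝓝[>] wc) atTop :=
    (hU'inf.comp hx₁lim).atTop_mul_pos (hVpos _ hwcxU)
      ((hVana _ hwcxU).continuousAt.tendsto.comp hwx₁)
  exact hnum.div_atTop (hden.atTop_add hnum)

/-- If additionally U'(x) → ∞ as x → x_U⁻, then the fraction of shared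
bonds θ(w) = w·U·V'/(U'·V + w·U·V') (evaluated along x₁(w)) tends to 0 as w → w_c⁺:
the phase transition at w_c is continuous. -/
theorem stmt_9
    (p b : ℕ → ℝ)
    (hp : ∀ n, 0 ≤ p n) (hp0 : p 0 = 0)
    (hb : ∀ n, 0 ≤ b n) (hb0 : 0 < b 0)
    (hpN : ∃ N, 1 ≤ N ∧ 0 < p N) (hbM : ∃ M, 1 ≤ M ∧ 0 < b M)
    (U V : ℝ → ℝ)
    (hU : ∀ x, U x = ∑' n, p n * x ^ n)
    (hV : ∀ x, V x = ∑' n, b n * x ^ n)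
    (xU xV : ℝ) (hxU0 : 0 < xU) (hxUV : xU < xV) (hxV1 : xV ≤ 1)
    (hUconv : ∀ x : ℝ, 0 ≤ x → x < xU → Summable fun n => p n * x ^ n)
    (hUdiv : ∀ x : ℝ, xU < x → ¬ Summable fun n => p n * x ^ n)
    (hVconv : ∀ x : ℝ, 0 ≤ x → x < xV → Summable fun n => b n * x ^ n)
    (hVdiv : ∀ x : ℝ, xV < x → ¬ Summable fun n => b n * x ^ n)
    (hVinf : Filter.Tendsto V (𝓝[<] xV) Filter.atTop)
    (L : ℝ) (hL : Filter.Tendsto U (𝓝[<] xU) (𝓝 L))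
    (hsub : L * V xU < 1)
    (wc : ℝ) (hwc : wc ∈ Set.Ioo 1 (xV / xU)) (hwceq : L * V (wc * xU) = 1)
    (x₁ : ℝ → ℝ)
    (hx₁ : ∀ w ∈ Set.Ioo wc (xV / xU),
      x₁ w ∈ Set.Ioo 0 xU ∧ U (x₁ w) * V (w * x₁ w) = 1)
    (hx₁uniq : ∀ w ∈ Set.Ioo wc (xV / xU), ∀ x ∈ Set.Ioo 0 xU,
      U x * V (w * x) = 1 → x = x₁ w)
    (hU'inf : Filter.Tendsto (deriv U) (𝓝[<] xU) Filter.atTop) :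
    Filter.Tendsto
      (fun w => w * U (x₁ w) * deriv V (w * x₁ w) /
        (deriv U (x₁ w) * V (w * x₁ w) + w * U (x₁ w) * deriv V (w * x₁ w)))
      (𝓝[>] wc) (𝓝 0) :=
  stmt_9_general p b hp hb hb0 hpN U V hU hV xU xV hxU0 hUconv hVconv L hL wc hwc hwceq x₁ hx₁
    hU'inf
end
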